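/- Let p be a prime, k ≥ 1, and n = p^k. Let R = ℤ/nℤ and R^× its group of units. Let D(R^×) denote the least positive integer ℓ such that every multiset over R^× of cardinality ℓ has a nonempty sub-multiset with product 1, and let I(S_R) denote the least positive integer ℓ such that every multiset over R of cardinality ℓ has a nonempty sub-multiset whose product x satisfies x·x = x. Then I(S_R) = D(R^×) + k − 1. -/

import Mathlib

/-!
Write `π` for the class of `p`. Every element of `ℤ/p^kℤ` is a unit or a multiple of `π`, and
`π` has nilpotency index `k`; hence the only idempotents are `0` and `1`. A sequence with `k`
non-units has product divisible by `π ^ k = 0`, and otherwise it contains `D(Rˣ)` units, among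
which some nonempty product is `1`. Conversely, `k - 1` copies of `π` together with a
product-one free sequence of `D(Rˣ) - 1` units has no idempotent subproduct: a subproduct is
`π ^ j * u` with `j < k` and `u` a unit, which is never `0`, and is `1` only when `j = 0` and
`u = 1`.
-/

/-- The Davenport constant of the unit group `(ℤ/nℤ)ˣ`. -/
noncomputable def davenportUnits (n : ℕ) : ℕ :=
  sInf {ℓ : ℕ | 0 < ℓ ∧ ∀ T : Multiset (ZMod n)ˣ, T.card = ℓ →
    ∃ W : Multiset (ZMod n)ˣ, W ≤ T ∧ W ≠ 0 ∧ W.prod = 1}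

/-- The `n`-modular Erdős–Burgess constant. -/
noncomputable def modularErdosBurgess (n : ℕ) : ℕ :=
  sInf {ℓ : ℕ | 0 < ℓ ∧ ∀ T : Multiset (ZMod n), T.card = ℓ →
    ∃ W : Multiset (ZMod n), W ≤ T ∧ W ≠ 0 ∧ W.prod * W.prod = W.prod}

open Multiset

namespace List

theorem prod_drop_take_eq_one {G : Type*} [Group G] (l : List G) {a b : ℕ} (hab : a ≤ b)
    (h : (l.take a).prod = (l.take b).prod) : ((l.take b).drop a).prod = 1 := by
  rwa [← prod_take_mul_prod_drop (l.take b) a, take_take, min_eq_left hab, left_eq_mul] at h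

end List

namespace Multiset

variable {α : Type*}

theorem exists_le_card_eq (s : Multiset α) {n : ℕ} (hn : n ≤ card s) :
    ∃ t ≤ s, card t = n := by
  have hpos : 0 < card (powersetCard n s) := by
    rw [card_powersetCard]
    exact Nat.choose_pos hn
  obtain ⟨t, ht⟩ := card_pos_iff_exists_mem.1 hpos
  exact ⟨t, mem_powersetCard.1 ht⟩

theorem exists_le_add_eq [DecidableEq α] {s t u : Multiset α} (h : u ≤ s + t) :
    ∃ s' ≤ s, ∃ t' ≤ t, u = s' + t' :=
  ⟨u ∩ s, inter_le_right, u - s, Multiset.sub_le_iff_le_add.2 (by rwa [add_comm]),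
    by rw [add_comm, sub_add_inter]⟩

end Multiset

theorem Units.val_multiset_prod {M : Type*} [CommMonoid M] (s : Multiset Mˣ) :
    ((s.prod : Mˣ) : M) = (s.map Units.val).prod :=
  map_multiset_prod (Units.coeHom M) s

section Subprod

variable {M : Type*} [CommMonoid M] (P : M → Prop)

def HasSubprod (T : Multiset M) : Prop :=
  ∃ W ≤ T, W ≠ 0 ∧ P W.prod

def subprodLengths : Set ℕ :=
  {ℓ : ℕ | 0 < ℓ ∧ ∀ T : Multiset M, card T = ℓ → HasSubprod P T}

/-- `D(G)` is `subprodConstant (· = 1)` on `G` and `I(S)` is `subprodConstant IsIdempotentElem`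
on `S`. -/
noncomputable def subprodConstant : ℕ :=
  sInf (subprodLengths P)

variable {P}

theorem HasSubprod.mono {T T' : Multiset M} (h : HasSubprod P T) (hT : T ≤ T') :
    HasSubprod P T' :=
  let ⟨W, hW, hW0, hWP⟩ := h
  ⟨W, hW.trans hT, hW0, hWP⟩

theorem not_hasSubprod_zero : ¬ HasSubprod P 0 :=
  fun ⟨_, hW, hW0, _⟩ => hW0 (le_zero.1 hW)

theorem hasSubprod_of_le_card {ℓ : ℕ} (h : ∀ T : Multiset M, card T = ℓ → HasSubprod P T)
    {T : Multiset M} (hT : ℓ ≤ card T) : HasSubprod P T :=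
  let ⟨T', hT', hcard⟩ := T.exists_le_card_eq hT
  (h T' hcard).mono hT'

theorem subprodConstant_eq {ℓ : ℕ} (hℓ : 0 < ℓ)
    (hall : ∀ T : Multiset M, ℓ ≤ card T → HasSubprod P T)
    (T₀ : Multiset M) (hT₀ : card T₀ + 1 = ℓ) (hbad : ¬ HasSubprod P T₀) :
    subprodConstant P = ℓ := by
  refine le_antisymm (Nat.sInf_le ⟨hℓ, fun T hT => hall T hT.ge⟩) ?_
  refine le_csInf ⟨ℓ, hℓ, fun T hT => hall T hT.ge⟩ fun m ⟨_, hm⟩ => ?_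
  by_contra! hlt
  exact hbad (hasSubprod_of_le_card hm (by omega))

variable {N : ℕ} (hN : ∀ T : Multiset M, N ≤ card T → HasSubprod P T)
include hN

theorem subprodConstant_mem :
    0 < subprodConstant P ∧ ∀ T : Multiset M, card T = subprodConstant P → HasSubprod P T :=
  Nat.sInf_mem (s := subprodLengths P) ⟨N + 1, N.succ_pos, fun T hT => hN T (by omega)⟩

theorem hasSubprod_of_subprodConstant_le {T : Multiset M} (hT : subprodConstant P ≤ card T) :
    HasSubprod P T :=
  hasSubprod_of_le_card (subprodConstant_mem hN).2 hT

theorem exists_card_add_one_eq_subprodConstant :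
    ∃ T₀ : Multiset M, card T₀ + 1 = subprodConstant P ∧ ¬ HasSubprod P T₀ := by
  obtain ⟨hpos, -⟩ := subprodConstant_mem hN
  rcases eq_or_ne (subprodConstant P) 1 with h1 | h1
  · exact ⟨0, by rw [card_zero, h1], not_hasSubprod_zero⟩
  · have hnot : subprodConstant P - 1 ∉ subprodLengths P :=
      Nat.notMem_of_lt_sInf (Nat.sub_lt hpos one_pos)
    simp only [subprodLengths, Set.mem_ofPred_eq, not_and, not_forall] at hnot
    obtain ⟨T₀, hcard, hbad⟩ := hnot (by omega)
    exact ⟨T₀, by omega, hbad⟩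

end Subprod

/-- Pigeonhole on the `|G| + 1` prefix products. -/
theorem hasSubprod_eq_one_of_card_le {G : Type*} [CommGroup G] [Fintype G] {T : Multiset G}
    (hT : Fintype.card G ≤ card T) : HasSubprod (· = 1) T := by
  set l := T.toList
  obtain ⟨i, j, hne, heq⟩ := Fintype.exists_ne_map_eq_of_card_lt
    (fun i : Fin (Fintype.card G + 1) => (l.take i).prod) (by simp)
  wlog hij : i < j generalizing i j
  · exact this j i hne.symm heq.symm (lt_of_le_of_ne (not_lt.1 hij) hne.symm)
  have hjl : (j : ℕ) ≤ l.length := by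
    rw [length_toList]
    omega
  refine ⟨((l.take j).drop i : List G), ?_, ?_, l.prod_drop_take_eq_one hij.le heq⟩
  · rw [← coe_toList T, coe_le]
    exact ((List.drop_sublist _ _).trans (List.take_sublist _ _)).subperm
  · rw [Ne, coe_eq_zero, ← List.length_eq_zero_iff, List.length_drop, List.length_take]
    omega

section NonunitsDivisible

variable {M : Type*} [CommMonoidWithZero M] {π : M} {k : ℕ}
  (hπ : ∀ x : M, IsUnit x ∨ π ∣ x)

include hπ

theorem IsIdempotentElem.eq_zero_or_one_of_isUnit_or_dvd (hπk : π ^ k = 0) (hk : k ≠ 0)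
    {e : M} (he : IsIdempotentElem e) : e = 0 ∨ e = 1 := by
  rcases hπ e with hu | ⟨c, rfl⟩
  · exact Or.inr (hu.mul_left_cancel (by rw [he.eq, mul_one]))
  · left
    rw [← he.pow_eq hk, mul_pow, hπk, zero_mul]

theorem hasSubprod_isIdempotentElem_of_card_le [Finite Mˣ] (hπk : π ^ k = 0) (hk : k ≠ 0)
    {T : Multiset M} (hT : subprodConstant (· = (1 : Mˣ)) + k - 1 ≤ card T) :
    HasSubprod IsIdempotentElem T := by
  have := Fintype.ofFinite Mˣ
  classical
  have hsplit := congrArg card (filter_add_not IsUnit T)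
  rw [card_add] at hsplit
  by_cases hnonunits : k ≤ card (T.filter (¬ IsUnit ·))
  · have hdvd : π ^ card (T.filter (¬ IsUnit ·)) ∣ (T.filter (¬ IsUnit ·)).prod := by
      simpa using prod_dvd_prod_of_dvd (fun _ => π) id fun x hx =>
        (hπ x).resolve_left (mem_filter.1 hx).2
    have hzero : (T.filter (¬ IsUnit ·)).prod = 0 := by
      rw [← zero_dvd_iff, ← hπk]
      exact (pow_dvd_pow π hnonunits).trans hdvd
    refine ⟨_, filter_le _ T, ?_, by rw [IsIdempotentElem, hzero, mul_zero]⟩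
    rw [Ne, ← card_eq_zero]
    omega
  · obtain ⟨U, hU⟩ : ∃ U : Multiset Mˣ, U.map Units.val = T.filter IsUnit := by
      lift T.filter IsUnit to Multiset Mˣ using fun x hx => (mem_filter.1 hx).2 with U
      exact ⟨U, rfl⟩
    obtain ⟨V, hVU, hV0, hV1⟩ := hasSubprod_of_subprodConstant_le
      (fun T' hT' => hasSubprod_eq_one_of_card_le hT') (T := U)
      (by rw [← card_map Units.val, hU]; omega)
    refine ⟨V.map Units.val, ?_, by simpa using hV0, ?_⟩
    · exact (map_le_map hVU).trans (hU ▸ filter_le _ T)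
    · rw [← Units.val_multiset_prod, hV1, Units.val_one]
      exact IsIdempotentElem.one

theorem not_hasSubprod_isIdempotentElem_replicate_add (hπk : π ^ k = 0)
    (hπk' : π ^ (k - 1) ≠ 0) {U : Multiset Mˣ} (hU : ¬ HasSubprod (· = 1) U) :
    ¬ HasSubprod IsIdempotentElem (replicate (k - 1) π + U.map Units.val) := by
  classical
  have : Nontrivial M := ⟨⟨_, _, hπk'⟩⟩
  have hk : k ≠ 0 := by
    rintro rfl
    exact hπk' hπk
  rintro ⟨W, hWle, hW0, hWidem⟩
  obtain ⟨W₁, hW₁, W₂, hW₂, rfl⟩ := exists_le_add_eq hWle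
  obtain ⟨j, hj, rfl⟩ := le_replicate_iff.1 hW₁
  obtain ⟨V, rfl⟩ : ∃ V : Multiset Mˣ, V.map Units.val = W₂ := by
    lift W₂ to Multiset Mˣ using fun x hx => by
      obtain ⟨u, -, rfl⟩ := mem_map.1 (mem_of_le hW₂ hx)
      exact u.isUnit
    exact ⟨W₂, rfl⟩
  have hprod : (replicate j π + V.map Units.val).prod = π ^ j * ((V.prod : Mˣ) : M) := by
    rw [prod_add, prod_replicate, Units.val_multiset_prod]
  rw [hprod] at hWidem
  rcases hWidem.eq_zero_or_one_of_isUnit_or_dvd hπ hπk hk with h0 | h1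
  · exact hπk' (pow_eq_zero_of_le hj ((Units.mul_left_eq_zero _).1 h0))
  · obtain rfl : j = 0 := by
      by_contra hj0
      have hπunit : IsUnit π := (isUnit_pow_iff hj0).1 (IsUnit.of_mul_eq_one _ h1)
      exact not_isUnit_zero (hπk ▸ hπunit.pow k)
    rw [pow_zero, one_mul, Units.val_eq_one] at h1
    exact hU ⟨V, (Multiset.map_le_map_iff Units.val_injective).1 hW₂, by simpa using hW0, h1⟩

theorem subprodConstant_isIdempotentElem_eq [Finite Mˣ] (hπk : π ^ k = 0)
    (hπk' : π ^ (k - 1) ≠ 0) :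
    subprodConstant (IsIdempotentElem : M → Prop) = subprodConstant (· = (1 : Mˣ)) + k - 1 := by
  have := Fintype.ofFinite Mˣ
  have hk : k ≠ 0 := by
    rintro rfl
    exact hπk' hπk
  obtain ⟨U, hUcard, hU⟩ := exists_card_add_one_eq_subprodConstant
    (fun T hT => hasSubprod_eq_one_of_card_le (G := Mˣ) hT)
  refine subprodConstant_eq (by omega)
    (fun T hT => hasSubprod_isIdempotentElem_of_card_le hπ hπk hk hT) _ ?_
    (not_hasSubprod_isIdempotentElem_replicate_add hπ hπk hπk' hU)
  rw [card_add, card_replicate, card_map]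
  omega

end NonunitsDivisible

namespace ZMod

variable {p k : ℕ}

theorem isUnit_or_natCast_dvd (hp : p.Prime) (x : ZMod (p ^ k)) :
    IsUnit x ∨ (p : ZMod (p ^ k)) ∣ x := by
  have : NeZero (p ^ k) := ⟨pow_ne_zero k hp.ne_zero⟩
  rw [← natCast_zmod_val x]
  by_cases hdvd : p ∣ x.val
  · exact Or.inr (Nat.cast_dvd_cast hdvd)
  · exact Or.inl ((isUnit_iff_coprime _ _).2
      (Nat.Coprime.pow_right k ((hp.coprime_iff_not_dvd.2 hdvd).symm)))

theorem natCast_pow_self : (p : ZMod (p ^ k)) ^ k = 0 := by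
  rw [← Nat.cast_pow, natCast_self]

theorem natCast_pow_pred_ne_zero (hp : p.Prime) (hk : 1 ≤ k) :
    (p : ZMod (p ^ k)) ^ (k - 1) ≠ 0 := by
  rw [← Nat.cast_pow, Ne, natCast_eq_zero_iff, Nat.pow_dvd_pow_iff_le_right hp.one_lt]
  omega

end ZMod

/-- For `n = p^k` a prime power, `I(S_R) = D(Rˣ) + k - 1`. -/
theorem stmt_4 (p : ℕ) (hp : p.Prime) (k : ℕ) (hk : 1 ≤ k) :
    modularErdosBurgess (p ^ k) = davenportUnits (p ^ k) + k - 1 := by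
  have : NeZero (p ^ k) := ⟨pow_ne_zero k hp.ne_zero⟩
  exact subprodConstant_isIdempotentElem_eq (ZMod.isUnit_or_natCast_dvd hp) ZMod.natCast_pow_self
    (ZMod.natCast_pow_pred_ne_zero hp hk)
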